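/- Let A be a complex unital Banach algebra, let N ≥ 1, and let X_1, …, X_N ∈ A. Set γ = 1/2 + i/2 and η = 1/2 − i/2, and define the complex Lie–Trotter (CLT2) product P(t) := exp(γ t X_1)·exp(γ t X_2) ⋯ exp(γ t X_N) · exp(η t X_1)·exp(η t X_2) ⋯ exp(η t X_N). Then, as real t → 0, ‖P(t) − exp(t·(X_1 + ⋯ + X_N))‖ = O(|t|³); that is, the CLT2 method is second-order accurate for every N. -/

import Mathlib

/-!
Let `P(z) = exp(z X₁) ⋯ exp(z X_N)` and `S = X₁ + ⋯ + X_N`. Each factor is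
`1 + z Xᵢ + z² Xᵢ²/2 + O(|z|³)`, and second-order expansions multiply like truncated
polynomials, so `P(z) = 1 + z S + z² W + O(|z|³)` for some `W`. Hence
`P(γz) P(ηz) = 1 + (γ + η) z S + z² ((γ² + η²) W + γη S²) + O(|z|³)`. Since `γ + η = 1` and
`γ² + η² = 0`, so that `γη = 1/2`, this is the expansion `1 + z S + z² S²/2` of `exp(z S)`,
whatever `W` is.
-/

open NormedSpace Asymptotics Filter Topology

section QuadraticExpansion

variable {𝕜 E A : Type*} [NontriviallyNormedField 𝕜]

def HasQuadraticExpansion [SeminormedAddCommGroup E] [NormedSpace 𝕜 E]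
    (f : 𝕜 → E) (a₀ a₁ a₂ : E) : Prop :=
  (fun z => f z - (a₀ + z • a₁ + z ^ 2 • a₂)) =O[𝓝 0] fun z => ‖z‖ ^ 3

section NormedSpace

variable [SeminormedAddCommGroup E] [NormedSpace 𝕜 E] {f g : 𝕜 → E} {a₀ a₁ a₂ : E}

theorem hasQuadraticExpansion_const (a : E) :
    HasQuadraticExpansion (fun _ : 𝕜 => a) a 0 0 := by
  simpa [HasQuadraticExpansion] using isBigO_zero _ _

theorem HasQuadraticExpansion.isBigO_one (hf : HasQuadraticExpansion f a₀ a₁ a₂) :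
    f =O[𝓝 0] fun _ => (1 : ℝ) := by
  have hpoly : (fun z : 𝕜 => a₀ + z • a₁ + z ^ 2 • a₂) =O[𝓝 0] fun _ => (1 : ℝ) :=
    (Continuous.tendsto (by fun_prop) 0).isBigO_one ℝ
  have hcube : Tendsto (fun z : 𝕜 => ‖z‖ ^ 3) (𝓝 0) (𝓝 0) := by
    simpa using (tendsto_norm_zero (E := 𝕜)).pow 3
  have hrem := hf.trans (hcube.isBigO_one ℝ)
  simpa using hrem.add hpoly

theorem HasQuadraticExpansion.comp_const_mul (hf : HasQuadraticExpansion f a₀ a₁ a₂) (c : 𝕜) :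
    HasQuadraticExpansion (fun z => f (c * z)) a₀ (c • a₁) (c ^ 2 • a₂) := by
  have hc : Tendsto (fun z : 𝕜 => c * z) (𝓝 0) (𝓝 0) := by
    simpa using (continuous_const_mul c).tendsto 0
  have hscale : (fun z : 𝕜 => ‖c * z‖ ^ 3) =O[𝓝 0] fun z => ‖z‖ ^ 3 := by
    simpa only [norm_mul, mul_pow] using (isBigO_refl (fun z : 𝕜 => ‖z‖ ^ 3) _).const_mul_left _
  refine ((hf.comp_tendsto hc).trans hscale).congr_left fun z => ?_
  simp only [Function.comp_apply, smul_smul, mul_pow, mul_comm z c, mul_comm (z ^ 2)]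

theorem HasQuadraticExpansion.isBigO_sub (hf : HasQuadraticExpansion f a₀ a₁ a₂)
    (hg : HasQuadraticExpansion g a₀ a₁ a₂) :
    (fun z => f z - g z) =O[𝓝 0] fun z => ‖z‖ ^ 3 := by
  simpa using hf.sub hg

end NormedSpace

section NormedAlgebra

variable [NormedRing A] [NormedAlgebra 𝕜 A] {f g : 𝕜 → A} {a₀ a₁ a₂ b₀ b₁ b₂ : A}

theorem isBigO_pow_smul {u : 𝕜 → A} (hu : u =O[𝓝 0] fun _ => (1 : ℝ)) (n : ℕ) :
    (fun z => z ^ n • u z) =O[𝓝 0] fun z => ‖z‖ ^ n := by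
  have h := (isBigO_norm_right.2 (isBigO_refl (fun z : 𝕜 => z ^ n) (𝓝 0))).smul hu
  simp only [smul_eq_mul, mul_one] at h
  simpa only [norm_pow] using h

theorem HasQuadraticExpansion.mul (hf : HasQuadraticExpansion f a₀ a₁ a₂)
    (hg : HasQuadraticExpansion g b₀ b₁ b₂) :
    HasQuadraticExpansion (fun z => f z * g z) (a₀ * b₀) (a₀ * b₁ + a₁ * b₀)
      (a₀ * b₂ + a₁ * b₁ + a₂ * b₀) := by
  set P : 𝕜 → A := fun z => a₀ + z • a₁ + z ^ 2 • a₂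
  set Q : 𝕜 → A := fun z => b₀ + z • b₁ + z ^ 2 • b₂
  have hP : P =O[𝓝 0] fun _ => (1 : ℝ) := (Continuous.tendsto (by fun_prop) 0).isBigO_one ℝ
  have hsplit : ∀ z, f z * g z - (a₀ * b₀ + z • (a₀ * b₁ + a₁ * b₀) +
      z ^ 2 • (a₀ * b₂ + a₁ * b₁ + a₂ * b₀)) =
      (f z - P z) * g z + P z * (g z - Q z) + z ^ 3 • (a₁ * b₂ + a₂ * b₁ + z • (a₂ * b₂)) := by
    intro z
    simp only [P, Q, mul_add, add_mul, sub_mul, mul_sub, smul_mul_assoc, mul_smul_comm,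
      smul_smul, smul_add]
    module
  have hcross : (fun z : 𝕜 => a₁ * b₂ + a₂ * b₁ + z • (a₂ * b₂)) =O[𝓝 0] fun _ => (1 : ℝ) :=
    (Continuous.tendsto (by fun_prop) 0).isBigO_one ℝ
  have hfg : (fun z => (f z - P z) * g z) =O[𝓝 0] fun z => ‖z‖ ^ 3 := by
    simpa only [mul_one] using IsBigO.mul hf hg.isBigO_one
  have hPg : (fun z => P z * (g z - Q z)) =O[𝓝 0] fun z => ‖z‖ ^ 3 := by
    simpa only [one_mul] using hP.mul hg
  simp only [HasQuadraticExpansion, hsplit]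
  exact (hfg.add hPg).add (isBigO_pow_smul hcross 3)

end NormedAlgebra

end QuadraticExpansion

section Exponential

variable {𝕜 A : Type*} [NontriviallyNormedField 𝕜] [CharZero 𝕜] [ContinuousSMul ℚ 𝕜]
  [NormedRing A] [NormedAlgebra 𝕜 A] [CompleteSpace A]

theorem hasQuadraticExpansion_exp_smul (X : A) :
    HasQuadraticExpansion (fun z : 𝕜 => exp (z • X)) 1 X ((2⁻¹ : 𝕜) • (X * X)) := by
  have htaylor := (exp_hasFPowerSeriesAt_zero (𝕂 := 𝕜) (𝔸 := A)).isBigO_sub_partialSum_pow 3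
  have hline : Tendsto (fun z : 𝕜 => z • X) (𝓝 0) (𝓝 0) := by
    simpa using (tendsto_id (x := 𝓝 (0 : 𝕜))).smul_const X
  have hnorm : (fun z : 𝕜 => ‖z • X‖ ^ 3) =O[𝓝 0] fun z => ‖z‖ ^ 3 := by
    refine ((isBigO_refl (fun z : 𝕜 => ‖z‖ ^ 3) _).const_mul_left (‖X‖ ^ 3)).congr_left
      fun z => ?_
    rw [norm_smul, mul_pow, mul_comm]
  refine ((htaylor.comp_tendsto hline).trans hnorm).congr_left fun z => ?_
  simp [FormalMultilinearSeries.partialSum, expSeries_apply_eq, Finset.sum_range_succ, smul_smul,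
    pow_two, mul_comm]

noncomputable def lieTrotterProduct (L : List A) (z : 𝕜) : A :=
  (L.map fun Y => exp (z • Y)).prod

theorem exists_hasQuadraticExpansion_lieTrotterProduct (L : List A) :
    ∃ W, HasQuadraticExpansion (lieTrotterProduct (𝕜 := 𝕜) L) 1 L.sum W := by
  induction L with
  | nil => exact ⟨0, hasQuadraticExpansion_const 1⟩
  | cons Y L ih =>
    obtain ⟨W, hW⟩ := ih
    have h := (hasQuadraticExpansion_exp_smul Y).mul hW
    rw [one_mul, one_mul, mul_one, add_comm, ← List.sum_cons] at h
    exact ⟨_, h⟩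

theorem isBigO_lieTrotterProduct_mul_sub_exp {γ η : 𝕜} (hsum : γ + η = 1)
    (hsq : γ ^ 2 + η ^ 2 = 0) (L : List A) :
    (fun z => lieTrotterProduct L (γ * z) * lieTrotterProduct L (η * z) - exp (z • L.sum))
      =O[𝓝 0] fun z => ‖z‖ ^ 3 := by
  obtain ⟨W, hW⟩ := exists_hasQuadraticExpansion_lieTrotterProduct (𝕜 := 𝕜) L
  have hprod := (hW.comp_const_mul γ).mul (hW.comp_const_mul η)
  have hγη : γ * η = 2⁻¹ := by linear_combination (1 / 2 : 𝕜) * (γ + η + 1) * hsum - hsq / 2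
  have hfirst : (1 : A) * (η • L.sum) + (γ • L.sum) * 1 = L.sum := by
    rw [one_mul, mul_one, ← add_smul, add_comm, hsum, one_smul]
  have hsecond : (1 : A) * (η ^ 2 • W) + (γ • L.sum) * (η • L.sum) + (γ ^ 2 • W) * 1 =
      (2⁻¹ : 𝕜) • (L.sum * L.sum) := by
    rw [one_mul, mul_one, smul_mul_smul_comm, hγη, add_right_comm, ← add_smul, add_comm (η ^ 2),
      hsq, zero_smul, zero_add]
  rw [one_mul, hfirst, hsecond] at hprod
  exact hprod.isBigO_sub (hasQuadraticExpansion_exp_smul L.sum)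

end Exponential

theorem sum_map_range_succ_eq_sum_Icc {M : Type*} [AddCommMonoid M] (X : ℕ → M) (N : ℕ) :
    ((List.range N).map fun i => X (i + 1)).sum = ∑ ℓ ∈ Finset.Icc 1 N, X ℓ := by
  rw [← Multiset.sum_coe, ← Multiset.map_coe, ← Multiset.range, ← Finset.range_val,
    ← Finset.sum_eq_multiset_sum, Finset.range_eq_Ico, Finset.sum_Ico_add' X 0 N 1]
  rfl

theorem CLT2_second_order_general {A : Type*} [NormedRing A] [NormedAlgebra ℂ A]
    [CompleteSpace A] (N : ℕ) (X : ℕ → A) :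
    (fun t : ℝ =>
        ((List.range N).map (fun ℓ =>
            NormedSpace.exp (((1 / 2 + Complex.I / 2) * (t : ℂ)) • X (ℓ + 1)))).prod *
          ((List.range N).map (fun ℓ =>
            NormedSpace.exp (((1 / 2 - Complex.I / 2) * (t : ℂ)) • X (ℓ + 1)))).prod -
          NormedSpace.exp ((t : ℂ) • ∑ ℓ ∈ Finset.Icc 1 N, X ℓ))
      =O[nhds (0 : ℝ)] fun t : ℝ => |t| ^ 3 := by
  have hclt := isBigO_lieTrotterProduct_mul_sub_exp (γ := 1 / 2 + Complex.I / 2)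
    (η := 1 / 2 - Complex.I / 2) (by ring) (by linear_combination Complex.I_sq / 2)
    ((List.range N).map fun ℓ => X (ℓ + 1))
  have hreal := hclt.comp_tendsto (Complex.continuous_ofReal.tendsto' 0 0 Complex.ofReal_zero)
  simpa [lieTrotterProduct, sum_map_range_succ_eq_sum_Icc, Function.comp_def] using hreal

/-- **The complex Lie–Trotter (CLT2) method is second-order accurate for every `N`.**
With `γ = 1/2 + i/2`, `η = 1/2 − i/2` and
`P(t) = exp(γtX₁)⋯exp(γtX_N)·exp(ηtX₁)⋯exp(ηtX_N)`, as real `t → 0`,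
`‖P(t) − exp(t(X₁ + ⋯ + X_N))‖ = O(|t|³)`. -/
theorem CLT2_second_order {A : Type*} [NormedRing A] [NormedAlgebra ℂ A]
    [CompleteSpace A] (N : ℕ) (hN : 1 ≤ N) (X : ℕ → A) :
    (fun t : ℝ =>
        ((List.range N).map (fun ℓ =>
            NormedSpace.exp (((1 / 2 + Complex.I / 2) * (t : ℂ)) • X (ℓ + 1)))).prod *
          ((List.range N).map (fun ℓ =>
            NormedSpace.exp (((1 / 2 - Complex.I / 2) * (t : ℂ)) • X (ℓ + 1)))).prod -
          NormedSpace.exp ((t : ℂ) • ∑ ℓ ∈ Finset.Icc 1 N, X ℓ))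
      =O[nhds (0 : ℝ)] fun t : ℝ => |t| ^ 3 :=
  CLT2_second_order_general N X
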